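/- Let p* > 0 and assume 2·p*·Φ̃(α₀, ξ) < 1. Then there exists a unique continuous function u : [α₀, ξ] → ℝ satisfying the integral equation u(η) = (1 + p*·Φ(η, u))/(1 + p*·Φ(ξ, u)) for all η ∈ [α₀, ξ]. -/

import Mathlib

/-!
The solution is the fixed point of `T u η = (1 + p Φ(η,u)) / (1 + p Φ(ξ,u))` on `C([α₀, ξ])`
with the sup metric; Banach's theorem applies because `T` is a contraction with constant
`2 p Φ̃(α₀, ξ)`. The Lipschitz bound `|Φ(η,u) - Φ(η,v)| ≤ Φ̃(α₀, ξ) ‖u - v‖` is the integral of a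
pointwise bound on the integrands of `Φ`: `x ↦ exp (-x)` is 1-Lipschitz on `x ≥ 0`, the maps
`N*/L*` and `1/L*` are Lipschitz, and `0 < E ≤ 1`. The factor 2 comes from the quotient. As
`Φ(η,u)` only sees `u` on `[α₀, η]`, it suffices to look at functions on `[α₀, ξ]`.
-/

open Real MeasureTheory Set

/-- `E(η,u) = exp(−(2/a)·∫_{α₀}^{η} s·N*(u(s))/L*(u(s)) ds)` -/
noncomputable def Efun (a : ℝ) (L N : ℝ → ℝ) (α₀ : ℝ) (u : ℝ → ℝ) (η : ℝ) : ℝ :=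
  Real.exp (-(2 / a) * ∫ s in α₀..η, s * N (u s) / L (u s))

/-- `Φ(η,u) = α₀^ν·∫_{α₀}^{η} E(v,u)/(v^ν·L*(u(v))) dv` -/
noncomputable def Phi (a ν : ℝ) (L N : ℝ → ℝ) (α₀ : ℝ) (u : ℝ → ℝ) (η : ℝ) : ℝ :=
  α₀ ^ ν * ∫ v in α₀..η, Efun a L N α₀ u v / (v ^ ν * L (u v))

/-- The Lipschitz bound `Φ̃(α₀, η)` from Lemma 4. -/
noncomputable def PhiTilde (a ν Lm NM Ltil Ntil α₀ η : ℝ) : ℝ :=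
  (α₀ ^ ν / Lm ^ 2) *
    ((1 / a) * (Ntil + NM * Ltil / Lm) *
        (η ^ (3 - ν) / (3 - ν) - α₀ ^ 2 * η ^ (1 - ν) / (1 - ν) +
          2 * α₀ ^ (3 - ν) / ((3 - ν) * (1 - ν))) +
      Ltil * (η ^ (1 - ν) - α₀ ^ (1 - ν)) / (1 - ν))

lemma abs_exp_neg_sub_exp_neg_le {x y : ℝ} (hx : 0 ≤ x) (hy : 0 ≤ y) :
    |exp (-x) - exp (-y)| ≤ |x - y| := by
  wlog hyx : y ≤ x generalizing x y
  · rw [abs_sub_comm, abs_sub_comm x]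
    exact this hy hx (le_of_not_ge hyx)
  have hexp : exp (-x) ≤ exp (-y) := exp_le_exp.2 (neg_le_neg hyx)
  rw [abs_of_nonpos (sub_nonpos.2 hexp), abs_of_nonneg (sub_nonneg.2 hyx), neg_sub]
  have hfactor : exp (-y) - exp (-x) = exp (-y) * (1 - exp (-(x - y))) := by
    rw [mul_sub, mul_one, ← exp_add]; ring_nf
  rw [hfactor]
  calc exp (-y) * (1 - exp (-(x - y))) ≤ 1 * (x - y) :=
        mul_le_mul (exp_le_one_iff.2 (by linarith)) (by linarith [add_one_le_exp (-(x - y))])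
          (sub_nonneg.2 (exp_le_one_iff.2 (by linarith))) zero_le_one
    _ = x - y := one_mul _

lemma abs_inv_sub_inv_le {L : ℝ → ℝ} {Lm Ltil : ℝ} (hLm : 0 < Lm) (hL : ∀ x, Lm ≤ L x)
    (hLlip : ∀ x y, |L x - L y| ≤ Ltil * |x - y|) (x y : ℝ) :
    |(L x)⁻¹ - (L y)⁻¹| ≤ Ltil / Lm ^ 2 * |x - y| := by
  have hx : 0 < L x := hLm.trans_le (hL x)
  have hy : 0 < L y := hLm.trans_le (hL y)
  rw [inv_sub_inv hx.ne' hy.ne', abs_div, abs_of_pos (mul_pos hx hy), abs_sub_comm]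
  calc |L x - L y| / (L x * L y) ≤ Ltil * |x - y| / Lm ^ 2 := by
        rw [sq]
        exact div_le_div₀ ((abs_nonneg _).trans (hLlip x y)) (hLlip x y)
          (by positivity) (mul_le_mul (hL x) (hL y) hLm.le hx.le)
    _ = Ltil / Lm ^ 2 * |x - y| := by ring

lemma abs_div_sub_div_le {L N : ℝ → ℝ} {Lm NM Ltil Ntil : ℝ} (hLm : 0 < Lm)
    (hL : ∀ x, Lm ≤ L x) (hN0 : ∀ x, 0 ≤ N x) (hNM : ∀ x, N x ≤ NM)
    (hLlip : ∀ x y, |L x - L y| ≤ Ltil * |x - y|)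
    (hNlip : ∀ x y, |N x - N y| ≤ Ntil * |x - y|) (x y : ℝ) :
    |N x / L x - N y / L y| ≤ (Ntil / Lm + NM * Ltil / Lm ^ 2) * |x - y| := by
  have hx : 0 < L x := hLm.trans_le (hL x)
  have hsplit : N x / L x - N y / L y = (N x - N y) / L x + N y * ((L x)⁻¹ - (L y)⁻¹) := by
    field_simp; ring
  have hnum : |(N x - N y) / L x| ≤ Ntil / Lm * |x - y| := by
    rw [abs_div, abs_of_pos hx, div_mul_eq_mul_div]
    exact div_le_div₀ ((abs_nonneg _).trans (hNlip x y)) (hNlip x y) hLm (hL x)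
  have hden : |N y * ((L x)⁻¹ - (L y)⁻¹)| ≤ NM * (Ltil / Lm ^ 2 * |x - y|) := by
    rw [abs_mul, abs_of_nonneg (hN0 y)]
    exact mul_le_mul (hNM y) (abs_inv_sub_inv_le hLm hL hLlip x y) (abs_nonneg _)
      ((hN0 y).trans (hNM y))
  calc |N x / L x - N y / L y| ≤ Ntil / Lm * |x - y| + NM * (Ltil / Lm ^ 2 * |x - y|) := by
        rw [hsplit]; exact (abs_add_le _ _).trans (add_le_add hnum hden)
    _ = (Ntil / Lm + NM * Ltil / Lm ^ 2) * |x - y| := by ring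

lemma abs_one_add_div_sub_one_add_div_le {A B C D : ℝ} (hB : 0 ≤ B) (hC : 0 ≤ C) (hCD : C ≤ D) :
    |(1 + A) / (1 + B) - (1 + C) / (1 + D)| ≤ |A - C| + |B - D| := by
  have hB1 : 1 ≤ 1 + B := by linarith
  have hD : 0 < 1 + D := by linarith
  have hsplit : (1 + A) / (1 + B) - (1 + C) / (1 + D)
      = (A - C) / (1 + B) + (1 + C) / (1 + D) * ((D - B) / (1 + B)) := by
    field_simp; ring
  have hq : |(1 + C) / (1 + D)| ≤ 1 := by
    rw [abs_of_nonneg (by positivity), div_le_one hD]; linarith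
  rw [hsplit]
  refine (abs_add_le _ _).trans ?_
  rw [abs_mul, abs_div (A - C), abs_div (D - B), abs_of_pos (by linarith : (0 : ℝ) < 1 + B),
    abs_sub_comm D]
  calc |A - C| / (1 + B) + |(1 + C) / (1 + D)| * (|B - D| / (1 + B))
      ≤ |A - C| + 1 * |B - D| := by
        gcongr
        · exact div_le_self (abs_nonneg _) hB1
        · exact div_le_self (abs_nonneg _) hB1
    _ = |A - C| + |B - D| := by rw [one_mul]

lemma abs_one_add_mul_div_sub_le {p A B C D δ : ℝ} (hp : 0 ≤ p) (hB : 0 ≤ B) (hC : 0 ≤ C)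
    (hCD : C ≤ D) (hAC : |A - C| ≤ δ) (hBD : |B - D| ≤ δ) :
    |(1 + p * A) / (1 + p * B) - (1 + p * C) / (1 + p * D)| ≤ 2 * p * δ := by
  refine (abs_one_add_div_sub_one_add_div_le (mul_nonneg hp hB) (mul_nonneg hp hC)
    (mul_le_mul_of_nonneg_left hCD hp)).trans ?_
  rw [← mul_sub, ← mul_sub, abs_mul, abs_mul, abs_of_nonneg hp]
  linarith [mul_le_mul_of_nonneg_left hAC hp, mul_le_mul_of_nonneg_left hBD hp]

theorem exists_unique_fixedPoint_Icc {α β : ℝ} (hαβ : α ≤ β) (F : (ℝ → ℝ) → ℝ → ℝ)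
    {K : ℝ} (hK0 : 0 ≤ K) (hK1 : K < 1)
    (hcont : ∀ u, Continuous u → ContinuousOn (F u) (Icc α β))
    (hlocal : ∀ u v, EqOn u v (Icc α β) → EqOn (F u) (F v) (Icc α β))
    (hlip : ∀ u v M, Continuous u → Continuous v → (∀ t ∈ Icc α β, |u t - v t| ≤ M) →
      ∀ η ∈ Icc α β, |F u η - F v η| ≤ K * M) :
    ∃ u : ℝ → ℝ, (ContinuousOn u (Icc α β) ∧ ∀ η ∈ Icc α β, u η = F u η) ∧
      ∀ v : ℝ → ℝ, ContinuousOn v (Icc α β) → (∀ η ∈ Icc α β, v η = F v η) →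
        EqOn v u (Icc α β) := by
  let ext : C(Icc α β, ℝ) → ℝ → ℝ := fun w => IccExtend hαβ w
  have hext : ∀ w : C(Icc α β, ℝ), Continuous (ext w) := fun w => w.continuous.Icc_extend'
  have hext_apply : ∀ w : C(Icc α β, ℝ), ∀ t (ht : t ∈ Icc α β), ext w t = w ⟨t, ht⟩ :=
    fun w t ht => IccExtend_of_mem hαβ w ht
  let T : C(Icc α β, ℝ) → C(Icc α β, ℝ) := fun w => ⟨(Icc α β).domRestrict (F (ext w)),
    (hcont _ (hext w)).domRestrict⟩
  have hT : ContractingWith ⟨K, hK0⟩ T := by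
    refine ⟨hK1, LipschitzWith.of_dist_le_mul fun w₁ w₂ => ?_⟩
    refine (ContinuousMap.dist_le (mul_nonneg hK0 dist_nonneg)).2 fun x => ?_
    refine hlip _ _ _ (hext w₁) (hext w₂) (fun t ht => ?_) x x.2
    rw [hext_apply w₁ t ht, hext_apply w₂ t ht, ← Real.dist_eq]
    exact ContinuousMap.dist_apply_le_dist _
  let φ := ContractingWith.fixedPoint T hT
  have hφ : T φ = φ := hT.fixedPoint_isFixedPt
  refine ⟨ext φ, ⟨(hext φ).continuousOn, fun η hη => ?_⟩, fun v hv hvF η hη => ?_⟩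
  · rw [hext_apply φ η hη]
    conv_lhs => rw [← hφ]
    rfl
  · let w : C(Icc α β, ℝ) := ⟨(Icc α β).domRestrict v, hv.domRestrict⟩
    have hw : EqOn (ext w) v (Icc α β) := fun t ht => hext_apply w t ht
    have hTw : T w = w := ContinuousMap.ext fun x => (hlocal _ _ hw x.2).trans (hvF x x.2).symm
    have hwφ : w = φ := hT.fixedPoint_unique hTw
    rw [hext_apply φ η hη, ← hwφ]
    rfl

section Phi

variable {a ν α₀ : ℝ} {L N u v : ℝ → ℝ}

lemma Efun_congr {η : ℝ} (h : EqOn u v (uIcc α₀ η)) :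
    Efun a L N α₀ u η = Efun a L N α₀ v η := by
  unfold Efun
  rw [intervalIntegral.integral_congr (g := fun s => s * N (v s) / L (v s)) fun s hs => by
    simp only [h hs]]

lemma Phi_congr {η : ℝ} (h : EqOn u v (uIcc α₀ η)) :
    Phi a ν L N α₀ u η = Phi a ν L N α₀ v η := by
  unfold Phi
  rw [intervalIntegral.integral_congr (g := fun s => Efun a L N α₀ v s / (s ^ ν * L (v s)))
    fun s hs => by simp only [Efun_congr (h.mono (uIcc_subset_uIcc_left hs)), h hs]]

lemma continuous_mul_div_comp (hL : ∀ x, 0 < L x) (hLc : Continuous L) (hNc : Continuous N)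
    (hu : Continuous u) : Continuous fun s => s * N (u s) / L (u s) :=
  (continuous_id.mul (hNc.comp hu)).div (hLc.comp hu) fun _ => (hL _).ne'

lemma continuous_Efun (hL : ∀ x, 0 < L x) (hLc : Continuous L) (hNc : Continuous N)
    (hu : Continuous u) : Continuous (Efun a L N α₀ u) :=
  continuous_exp.comp <| continuous_const.mul <| intervalIntegral.continuous_primitive
    (fun _ _ => (continuous_mul_div_comp hL hLc hNc hu).intervalIntegrable _ _) α₀

lemma Efun_pos {s : ℝ} : 0 < Efun a L N α₀ u s := exp_pos _

lemma integral_mul_div_comp_nonneg (hL : ∀ x, 0 < L x) (hN : ∀ x, 0 ≤ N x) (hα₀ : 0 ≤ α₀)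
    {s : ℝ} (hs : α₀ ≤ s) : 0 ≤ ∫ t in α₀..s, t * N (u t) / L (u t) :=
  intervalIntegral.integral_nonneg hs fun _ ht =>
    div_nonneg (mul_nonneg (hα₀.trans ht.1) (hN _)) (hL _).le

lemma Efun_le_one (ha : 0 ≤ a) (hL : ∀ x, 0 < L x) (hN : ∀ x, 0 ≤ N x) (hα₀ : 0 ≤ α₀)
    {s : ℝ} (hs : α₀ ≤ s) : Efun a L N α₀ u s ≤ 1 := by
  rw [Efun, exp_le_one_iff, neg_mul]
  exact neg_nonpos.2 (mul_nonneg (by positivity) (integral_mul_div_comp_nonneg hL hN hα₀ hs))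

lemma continuousOn_Phi_integrand (hL : ∀ x, 0 < L x) (hLc : Continuous L) (hNc : Continuous N)
    (hu : Continuous u) :
    ContinuousOn (fun s => Efun a L N α₀ u s / (s ^ ν * L (u s))) (Ioi 0) :=
  (continuous_Efun hL hLc hNc hu).continuousOn.div
    ((continuousOn_id.rpow_const fun _ hs => Or.inl (ne_of_gt hs)).mul
      (hLc.comp hu).continuousOn)
    fun _ hs => (mul_pos (rpow_pos_of_pos hs ν) (hL _)).ne'

lemma intervalIntegrable_Phi_integrand (hL : ∀ x, 0 < L x) (hLc : Continuous L)
    (hNc : Continuous N) (hu : Continuous u) (hα₀ : 0 < α₀) {η : ℝ} (hη : α₀ ≤ η) :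
    IntervalIntegrable (fun s => Efun a L N α₀ u s / (s ^ ν * L (u s))) volume α₀ η :=
  ((continuousOn_Phi_integrand hL hLc hNc hu).mono fun _ hs =>
    hα₀.trans_le (uIcc_of_le hη ▸ hs).1).intervalIntegrable

lemma Phi_integrand_nonneg (hL : ∀ x, 0 < L x) {s : ℝ} (hs : 0 < s) :
    0 ≤ Efun a L N α₀ u s / (s ^ ν * L (u s)) :=
  div_nonneg Efun_pos.le (mul_pos (rpow_pos_of_pos hs ν) (hL _)).le

lemma continuousOn_Phi (hL : ∀ x, 0 < L x) (hLc : Continuous L) (hNc : Continuous N)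
    (hu : Continuous u) (hα₀ : 0 < α₀) {ξ : ℝ} (hαξ : α₀ ≤ ξ) :
    ContinuousOn (Phi a ν L N α₀ u) (Icc α₀ ξ) := by
  have h := intervalIntegral.continuousOn_primitive_interval'
    (intervalIntegrable_Phi_integrand (a := a) (ν := ν) hL hLc hNc hu hα₀ hαξ) left_mem_uIcc
  rw [uIcc_of_le hαξ] at h
  exact continuousOn_const.mul h

lemma Phi_nonneg (hL : ∀ x, 0 < L x) (hα₀ : 0 < α₀) {η : ℝ} (hη : α₀ ≤ η) :
    0 ≤ Phi a ν L N α₀ u η :=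
  mul_nonneg (rpow_nonneg hα₀.le ν) (intervalIntegral.integral_nonneg hη fun _ hs =>
    Phi_integrand_nonneg hL (hα₀.trans_le hs.1))

lemma Phi_le_Phi (hL : ∀ x, 0 < L x) (hLc : Continuous L) (hNc : Continuous N)
    (hu : Continuous u) (hα₀ : 0 < α₀) {η ξ : ℝ} (hη : α₀ ≤ η) (hηξ : η ≤ ξ) :
    Phi a ν L N α₀ u η ≤ Phi a ν L N α₀ u ξ := by
  refine mul_le_mul_of_nonneg_left ?_ (rpow_nonneg hα₀.le ν)
  refine intervalIntegral.integral_mono_interval le_rfl hη hηξ ?_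
    (intervalIntegrable_Phi_integrand hL hLc hNc hu hα₀ (hη.trans hηξ))
  filter_upwards [ae_restrict_mem measurableSet_Ioc] with s hs
  exact Phi_integrand_nonneg hL (hα₀.trans hs.1)

end Phi

section Lipschitz

variable {a ν α₀ ξ : ℝ} {L N u v : ℝ → ℝ} {Kq Kr Lm M : ℝ}

lemma abs_integral_mul_div_comp_sub_le (hL : ∀ x, 0 < L x) (hLc : Continuous L)
    (hNc : Continuous N) (hu : Continuous u) (hv : Continuous v)
    (hq : ∀ x y, |N x / L x - N y / L y| ≤ Kq * |x - y|) (hKq : 0 ≤ Kq)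
    (hα₀ : 0 ≤ α₀) {s : ℝ} (hs : α₀ ≤ s) (huv : ∀ t ∈ Icc α₀ s, |u t - v t| ≤ M) :
    |(∫ t in α₀..s, t * N (u t) / L (u t)) - ∫ t in α₀..s, t * N (v t) / L (v t)|
      ≤ Kq * M * ((s ^ 2 - α₀ ^ 2) / 2) := by
  have hcu := continuous_mul_div_comp hL hLc hNc hu
  have hcv := continuous_mul_div_comp hL hLc hNc hv
  rw [← intervalIntegral.integral_sub (hcu.intervalIntegrable _ _) (hcv.intervalIntegrable _ _),
    ← integral_id, ← intervalIntegral.integral_const_mul]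
  refine (intervalIntegral.abs_integral_le_integral_abs hs).trans <|
    intervalIntegral.integral_mono_on hs ((hcu.sub hcv).abs.intervalIntegrable _ _)
      ((continuous_const.mul continuous_id).intervalIntegrable _ _) fun t ht => ?_
  have ht0 : 0 ≤ t := hα₀.trans ht.1
  calc |t * N (u t) / L (u t) - t * N (v t) / L (v t)|
      = t * |N (u t) / L (u t) - N (v t) / L (v t)| := by
        rw [mul_div_assoc, mul_div_assoc, ← mul_sub, abs_mul, abs_of_nonneg ht0]
    _ ≤ t * (Kq * M) :=
        mul_le_mul_of_nonneg_left ((hq _ _).trans (mul_le_mul_of_nonneg_left (huv t ht) hKq)) ht0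
    _ = Kq * M * t := by ring

lemma abs_Efun_sub_Efun_le (ha : 0 ≤ a) (hL : ∀ x, 0 < L x) (hN : ∀ x, 0 ≤ N x)
    (hLc : Continuous L) (hNc : Continuous N) (hu : Continuous u) (hv : Continuous v)
    (hq : ∀ x y, |N x / L x - N y / L y| ≤ Kq * |x - y|) (hKq : 0 ≤ Kq)
    (hα₀ : 0 ≤ α₀) {s : ℝ} (hs : α₀ ≤ s) (huv : ∀ t ∈ Icc α₀ s, |u t - v t| ≤ M) :
    |Efun a L N α₀ u s - Efun a L N α₀ v s| ≤ Kq * M * (s ^ 2 - α₀ ^ 2) / a := by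
  set Xu := ∫ t in α₀..s, t * N (u t) / L (u t)
  set Xv := ∫ t in α₀..s, t * N (v t) / L (v t)
  have h2a : 0 ≤ 2 / a := by positivity
  calc |Efun a L N α₀ u s - Efun a L N α₀ v s| ≤ |2 / a * Xu - 2 / a * Xv| := by
        simpa only [Efun, neg_mul] using abs_exp_neg_sub_exp_neg_le
          (mul_nonneg h2a (integral_mul_div_comp_nonneg hL hN hα₀ hs))
          (mul_nonneg h2a (integral_mul_div_comp_nonneg hL hN hα₀ hs))
    _ = 2 / a * |Xu - Xv| := by rw [← mul_sub, abs_mul, abs_of_nonneg h2a]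
    _ ≤ 2 / a * (Kq * M * ((s ^ 2 - α₀ ^ 2) / 2)) := by
        gcongr
        exact abs_integral_mul_div_comp_sub_le hL hLc hNc hu hv hq hKq hα₀ hs huv
    _ = Kq * M * (s ^ 2 - α₀ ^ 2) / a := by ring

lemma abs_Phi_integrand_sub_le (ha : 0 ≤ a) (hLm : 0 < Lm) (hL : ∀ x, Lm ≤ L x)
    (hN : ∀ x, 0 ≤ N x) (hLc : Continuous L) (hNc : Continuous N)
    (hu : Continuous u) (hv : Continuous v)
    (hq : ∀ x y, |N x / L x - N y / L y| ≤ Kq * |x - y|) (hKq : 0 ≤ Kq)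
    (hr : ∀ x y, |(L x)⁻¹ - (L y)⁻¹| ≤ Kr * |x - y|) (hKr : 0 ≤ Kr)
    (hα₀ : 0 < α₀) {s : ℝ} (hs : α₀ ≤ s) (huv : ∀ t ∈ Icc α₀ s, |u t - v t| ≤ M) :
    |Efun a L N α₀ u s / (s ^ ν * L (u s)) - Efun a L N α₀ v s / (s ^ ν * L (v s))|
      ≤ (Kq / (a * Lm) * (s ^ 2 - α₀ ^ 2) + Kr) / s ^ ν * M := by
  have hLpos : ∀ x, 0 < L x := fun x => hLm.trans_le (hL x)
  have hsν : 0 < s ^ ν := rpow_pos_of_pos (hα₀.trans_le hs) ν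
  set Eu := Efun a L N α₀ u s
  set Ev := Efun a L N α₀ v s
  have hsplit : Eu / (s ^ ν * L (u s)) - Ev / (s ^ ν * L (v s))
      = ((Eu - Ev) * (L (u s))⁻¹ + Ev * ((L (u s))⁻¹ - (L (v s))⁻¹)) / s ^ ν := by
    have := (hLpos (u s)).ne'
    have := (hLpos (v s)).ne'
    field_simp
    ring
  have hE := abs_Efun_sub_Efun_le ha hLpos hN hLc hNc hu hv hq hKq hα₀.le hs huv
  have hEv : |Ev| ≤ 1 := (abs_of_pos Efun_pos).trans_le (Efun_le_one ha hLpos hN hα₀.le hs)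
  rw [hsplit, abs_div, abs_of_pos hsν, div_mul_eq_mul_div]
  gcongr
  calc |(Eu - Ev) * (L (u s))⁻¹ + Ev * ((L (u s))⁻¹ - (L (v s))⁻¹)|
      ≤ |Eu - Ev| * (L (u s))⁻¹ + |Ev| * |(L (u s))⁻¹ - (L (v s))⁻¹| := by
        refine (abs_add_le _ _).trans_eq ?_
        rw [abs_mul, abs_mul, abs_of_pos (inv_pos.2 (hLpos (u s)))]
    _ ≤ Kq * M * (s ^ 2 - α₀ ^ 2) / a * Lm⁻¹ + 1 * (Kr * M) :=
        add_le_add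
          (mul_le_mul hE (inv_anti₀ hLm (hL _)) (inv_nonneg.2 (hLpos _).le)
            ((abs_nonneg _).trans hE))
          (mul_le_mul hEv ((hr _ _).trans (mul_le_mul_of_nonneg_left (huv s ⟨hs, le_rfl⟩) hKr))
            (abs_nonneg _) zero_le_one)
    _ = (Kq / (a * Lm) * (s ^ 2 - α₀ ^ 2) + Kr) * M := by ring


lemma abs_Phi_sub_Phi_le_integral (ha : 0 ≤ a) (hLm : 0 < Lm) (hL : ∀ x, Lm ≤ L x)
    (hN : ∀ x, 0 ≤ N x) (hLc : Continuous L) (hNc : Continuous N)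
    (hu : Continuous u) (hv : Continuous v)
    (hq : ∀ x y, |N x / L x - N y / L y| ≤ Kq * |x - y|) (hKq : 0 ≤ Kq)
    (hr : ∀ x y, |(L x)⁻¹ - (L y)⁻¹| ≤ Kr * |x - y|) (hKr : 0 ≤ Kr)
    (hα₀ : 0 < α₀) {η : ℝ} (hη : α₀ ≤ η) (hηξ : η ≤ ξ)
    (huv : ∀ t ∈ Icc α₀ ξ, |u t - v t| ≤ M) :
    |Phi a ν L N α₀ u η - Phi a ν L N α₀ v η|
      ≤ α₀ ^ ν * (∫ s in α₀..ξ, (Kq / (a * Lm) * (s ^ 2 - α₀ ^ 2) + Kr) / s ^ ν) * M := by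
  have hLpos : ∀ x, 0 < L x := fun x => hLm.trans_le (hL x)
  set g := fun s : ℝ => (Kq / (a * Lm) * (s ^ 2 - α₀ ^ 2) + Kr) / s ^ ν
  have hg_int : ∀ b, α₀ ≤ b → IntervalIntegrable g volume α₀ b := fun b hb => by
    have hpos : ∀ s ∈ uIcc α₀ b, 0 < s := fun s hs => hα₀.trans_le (uIcc_of_le hb ▸ hs).1
    exact ContinuousOn.intervalIntegrable <| ContinuousOn.div (by fun_prop)
      (continuousOn_id.rpow_const fun s hs => Or.inl (hpos s hs).ne')
      fun s hs => (rpow_pos_of_pos (hpos s hs) ν).ne'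
  have hM : 0 ≤ M := (abs_nonneg _).trans (huv α₀ ⟨le_rfl, hη.trans hηξ⟩)
  rw [Phi, Phi, ← mul_sub, abs_mul, abs_of_nonneg (rpow_nonneg hα₀.le ν), mul_assoc,
    ← intervalIntegral.integral_sub (intervalIntegrable_Phi_integrand hLpos hLc hNc hu hα₀ hη)
      (intervalIntegrable_Phi_integrand hLpos hLc hNc hv hα₀ hη)]
  refine mul_le_mul_of_nonneg_left ?_ (rpow_nonneg hα₀.le ν)
  calc _ ≤ ∫ s in α₀..η, |Efun a L N α₀ u s / (s ^ ν * L (u s))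
          - Efun a L N α₀ v s / (s ^ ν * L (v s))| :=
        intervalIntegral.abs_integral_le_integral_abs hη
    _ ≤ ∫ s in α₀..η, g s * M := by
        refine intervalIntegral.integral_mono_on hη (IntervalIntegrable.abs ?_)
          ((hg_int η hη).mul_const M) fun s hs => ?_
        · exact (intervalIntegrable_Phi_integrand hLpos hLc hNc hu hα₀ hη).sub
            (intervalIntegrable_Phi_integrand hLpos hLc hNc hv hα₀ hη)
        · exact abs_Phi_integrand_sub_le ha hLm hL hN hLc hNc hu hv hq hKq hr hKr hα₀ hs.1
            fun t ht => huv t ⟨ht.1, ht.2.trans (hs.2.trans hηξ)⟩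
    _ = (∫ s in α₀..η, g s) * M := intervalIntegral.integral_mul_const M g
    _ ≤ (∫ s in α₀..ξ, g s) * M := by
        refine mul_le_mul_of_nonneg_right (intervalIntegral.integral_mono_interval le_rfl hη hηξ
          ?_ (hg_int ξ (hη.trans hηξ))) hM
        filter_upwards [ae_restrict_mem measurableSet_Ioc] with s hs
        have hs0 : 0 < s := hα₀.trans hs.1
        have : 0 ≤ s ^ 2 - α₀ ^ 2 := by nlinarith [hs.1]
        positivity

end Lipschitz

lemma integral_quadratic_div_rpow {ν α₀ ξ : ℝ} (hν : ν < 1) (hα₀ : 0 < α₀) (hαξ : α₀ ≤ ξ)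
    (c₁ c₂ : ℝ) :
    ∫ s in α₀..ξ, (c₁ * s ^ 2 + c₂) / s ^ ν
      = c₁ * ((ξ ^ (3 - ν) - α₀ ^ (3 - ν)) / (3 - ν))
        + c₂ * ((ξ ^ (1 - ν) - α₀ ^ (1 - ν)) / (1 - ν)) := by
  have hcongr : EqOn (fun s : ℝ => (c₁ * s ^ 2 + c₂) / s ^ ν)
      (fun s => c₁ * s ^ (2 - ν) + c₂ * s ^ (-ν)) (uIcc α₀ ξ) := fun s hs => by
    have hs0 : 0 < s := hα₀.trans_le (uIcc_of_le hαξ ▸ hs).1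
    simp only [rpow_sub hs0, rpow_neg hs0.le, rpow_two]
    ring
  rw [intervalIntegral.integral_congr hcongr, intervalIntegral.integral_add
      ((intervalIntegral.intervalIntegrable_rpow' (by linarith)).const_mul _)
      ((intervalIntegral.intervalIntegrable_rpow' (by linarith)).const_mul _),
    intervalIntegral.integral_const_mul, intervalIntegral.integral_const_mul,
    integral_rpow (Or.inl (by linarith)), integral_rpow (Or.inl (by linarith))]
  ring_nf

section PhiTilde

variable {a ν α₀ ξ Lm NM Ltil Ntil : ℝ}

lemma PhiTilde_eq_integral (ha : 0 < a) (hν : ν < 1) (hα₀ : 0 < α₀) (hαξ : α₀ ≤ ξ)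
    (hLm : 0 < Lm) :
    PhiTilde a ν Lm NM Ltil Ntil α₀ ξ = α₀ ^ ν * ∫ s in α₀..ξ,
      ((Ntil / Lm + NM * Ltil / Lm ^ 2) / (a * Lm) * (s ^ 2 - α₀ ^ 2) + Ltil / Lm ^ 2) / s ^ ν := by
  have hexpand : ∀ c : ℝ, (fun s : ℝ => (c * (s ^ 2 - α₀ ^ 2) + Ltil / Lm ^ 2) / s ^ ν)
      = fun s => (c * s ^ 2 + (Ltil / Lm ^ 2 - c * α₀ ^ 2)) / s ^ ν := fun c => by
    funext s; ring
  have hα₀pow : α₀ ^ (3 - ν) = α₀ ^ 2 * α₀ ^ (1 - ν) := by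
    rw [show 3 - ν = 2 + (1 - ν) by ring, rpow_add hα₀, rpow_two]
  have h3ν : 3 - ν ≠ 0 := by linarith
  have h1ν : 1 - ν ≠ 0 := by linarith
  rw [hexpand, integral_quadratic_div_rpow hν hα₀ hαξ, PhiTilde, hα₀pow]
  field_simp
  ring

lemma PhiTilde_nonneg (ha : 0 < a) (hν : ν < 1) (hα₀ : 0 < α₀) (hαξ : α₀ ≤ ξ) (hLm : 0 < Lm)
    (hNM : 0 ≤ NM) (hLtil : 0 ≤ Ltil) (hNtil : 0 ≤ Ntil) :
    0 ≤ PhiTilde a ν Lm NM Ltil Ntil α₀ ξ := by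
  rw [PhiTilde_eq_integral ha hν hα₀ hαξ hLm]
  refine mul_nonneg (rpow_nonneg hα₀.le ν) (intervalIntegral.integral_nonneg hαξ fun s hs => ?_)
  have hs0 : 0 < s := hα₀.trans_le hs.1
  have : 0 ≤ s ^ 2 - α₀ ^ 2 := by nlinarith [hs.1]
  positivity

lemma abs_Phi_sub_Phi_le {L N u v : ℝ → ℝ} {M η : ℝ} (ha : 0 < a) (hν : ν < 1) (hα₀ : 0 < α₀)
    (hLm : 0 < Lm) (hLtil : 0 ≤ Ltil) (hNtil : 0 ≤ Ntil)
    (hL : ∀ x, Lm ≤ L x) (hN : ∀ x, 0 ≤ N x) (hNM : ∀ x, N x ≤ NM)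
    (hLlip : ∀ x y, |L x - L y| ≤ Ltil * |x - y|) (hNlip : ∀ x y, |N x - N y| ≤ Ntil * |x - y|)
    (hLc : Continuous L) (hNc : Continuous N) (hu : Continuous u) (hv : Continuous v)
    (hη : α₀ ≤ η) (hηξ : η ≤ ξ) (huv : ∀ t ∈ Icc α₀ ξ, |u t - v t| ≤ M) :
    |Phi a ν L N α₀ u η - Phi a ν L N α₀ v η| ≤ PhiTilde a ν Lm NM Ltil Ntil α₀ ξ * M := by
  have hNM0 : 0 ≤ NM := (hN 0).trans (hNM 0)
  rw [PhiTilde_eq_integral ha hν hα₀ (hη.trans hηξ) hLm]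
  exact abs_Phi_sub_Phi_le_integral ha.le hLm hL hN hLc hNc hu hv
    (abs_div_sub_div_le hLm hL hN hNM hLlip hNlip) (by positivity)
    (abs_inv_sub_inv_le hLm hL hLlip) (by positivity) hα₀ hη hηξ huv

end PhiTilde

theorem stmt_11_general (a ν α₀ ξ : ℝ) (L N : ℝ → ℝ) (Lm LM Nm NM Ltil Ntil p : ℝ)
    (ha : 0 < a) (hν1 : ν < 1) (hα₀ : 0 < α₀) (hαξ : α₀ < ξ)
    (hp : 0 < p)
    (hLcont : Continuous L) (hNcont : Continuous N)
    (hLm : 0 < Lm) (hNm : 0 < Nm) (hLtil : 0 < Ltil) (hNtil : 0 < Ntil)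
    (hL : ∀ x : ℝ, Lm ≤ L x ∧ L x ≤ LM)
    (hN : ∀ x : ℝ, Nm ≤ N x ∧ N x ≤ NM)
    (hLlip : ∀ x y : ℝ, |L x - L y| ≤ Ltil * |x - y|)
    (hNlip : ∀ x y : ℝ, |N x - N y| ≤ Ntil * |x - y|)
    (hcontr : 2 * p * PhiTilde a ν Lm NM Ltil Ntil α₀ ξ < 1) :
    ∃ u : ℝ → ℝ,
      (ContinuousOn u (Icc α₀ ξ) ∧
        ∀ η ∈ Icc α₀ ξ,
          u η = (1 + p * Phi a ν L N α₀ u η) / (1 + p * Phi a ν L N α₀ u ξ)) ∧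
      ∀ v : ℝ → ℝ, ContinuousOn v (Icc α₀ ξ) →
        (∀ η ∈ Icc α₀ ξ,
          v η = (1 + p * Phi a ν L N α₀ v η) / (1 + p * Phi a ν L N α₀ v ξ)) →
        EqOn v u (Icc α₀ ξ) := by
  have hLm' : ∀ x, Lm ≤ L x := fun x => (hL x).1
  have hLpos : ∀ x, 0 < L x := fun x => hLm.trans_le (hLm' x)
  have hN0 : ∀ x, 0 ≤ N x := fun x => hNm.le.trans (hN x).1
  have hNM : ∀ x, N x ≤ NM := fun x => (hN x).2
  have hΦ := fun u v M hu hv huv η (hη : α₀ ≤ η) (hηξ : η ≤ ξ) =>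
    abs_Phi_sub_Phi_le (u := u) (v := v) (M := M) ha hν1 hα₀ hLm hLtil.le hNtil.le hLm' hN0 hNM
      hLlip hNlip hLcont hNcont hu hv hη hηξ huv
  have hK0 : 0 ≤ 2 * p * PhiTilde a ν Lm NM Ltil Ntil α₀ ξ :=
    mul_nonneg (by positivity) (PhiTilde_nonneg ha hν1 hα₀ hαξ.le hLm
      ((hN0 0).trans (hNM 0)) hLtil.le hNtil.le)
  refine exists_unique_fixedPoint_Icc hαξ.le
    (fun u η => (1 + p * Phi a ν L N α₀ u η) / (1 + p * Phi a ν L N α₀ u ξ)) hK0 hcontr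
    (fun u hu => (continuousOn_const.add (continuousOn_const.mul
      (continuousOn_Phi hLpos hLcont hNcont hu hα₀ hαξ.le))).div_const _)
    (fun u v huv η hη => ?_) (fun u v M hu hv huv η hη => ?_)
  · have hsub : ∀ {b}, b ∈ Icc α₀ ξ → uIcc α₀ b ⊆ Icc α₀ ξ :=
      uIcc_subset_Icc (left_mem_Icc.2 hαξ.le)
    simp only [Phi_congr (huv.mono (hsub hη)), Phi_congr (huv.mono (hsub (right_mem_Icc.2 hαξ.le)))]
  · rw [mul_assoc _ (PhiTilde _ _ _ _ _ _ _ _)]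
    exact abs_one_add_mul_div_sub_le hp.le (Phi_nonneg hLpos hα₀ hαξ.le)
      (Phi_nonneg hLpos hα₀ hη.1) (Phi_le_Phi hLpos hLcont hNcont hv hα₀ hη.1 hη.2)
      (hΦ u v M hu hv huv η hη.1 hη.2) (hΦ u v M hu hv huv ξ hαξ.le le_rfl)

theorem stmt_11 (a ν α₀ ξ : ℝ) (L N : ℝ → ℝ) (Lm LM Nm NM Ltil Ntil p : ℝ)
    (ha : 0 < a) (hν0 : 0 < ν) (hν1 : ν < 1) (hα₀ : 0 < α₀) (hαξ : α₀ < ξ)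
    (hp : 0 < p)
    (hLcont : Continuous L) (hNcont : Continuous N)
    (hLm : 0 < Lm) (hNm : 0 < Nm) (hLtil : 0 < Ltil) (hNtil : 0 < Ntil)
    (hL : ∀ x : ℝ, Lm ≤ L x ∧ L x ≤ LM)
    (hN : ∀ x : ℝ, Nm ≤ N x ∧ N x ≤ NM)
    (hLlip : ∀ x y : ℝ, |L x - L y| ≤ Ltil * |x - y|)
    (hNlip : ∀ x y : ℝ, |N x - N y| ≤ Ntil * |x - y|)
    (hcontr : 2 * p * PhiTilde a ν Lm NM Ltil Ntil α₀ ξ < 1) :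
    ∃ u : ℝ → ℝ,
      (ContinuousOn u (Icc α₀ ξ) ∧
        ∀ η ∈ Icc α₀ ξ,
          u η = (1 + p * Phi a ν L N α₀ u η) / (1 + p * Phi a ν L N α₀ u ξ)) ∧
      ∀ v : ℝ → ℝ, ContinuousOn v (Icc α₀ ξ) →
        (∀ η ∈ Icc α₀ ξ,
          v η = (1 + p * Phi a ν L N α₀ v η) / (1 + p * Phi a ν L N α₀ v ξ)) →
        EqOn v u (Icc α₀ ξ) :=
  stmt_11_general a ν α₀ ξ L N Lm LM Nm NM Ltil Ntil p ha hν1 hα₀ hαξ hp hLcont hNcont hLm hNm hLtil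
    hNtil hL hN hLlip hNlip hcontr
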